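/- arXiv:2211.08767 — 2 statements merged into one kernel-verified Lean document; each statement's English description precedes it below -/
import Mathlib

section
/- Assume p_{0,2} < κ < p_{0,1} and u_{0,2} < u_{0,1} satisfy (p_{0,1} − p_{0,2})(𝒯^i(p_{0,2}) − 1) = (u_{0,1} − u_{0,2})², and set λ̄₂ = −(u_{0,2} − u_{0,1})/(𝒯^i(p_{0,2}) − 1). For ε > 0 let p_{0,2}^ε < κ with p_{0,2}^ε → p_{0,2} as ε → 0, and define u_{0,2}^ε := u_{0,1} − √((𝒯_ε(p_{0,2}^ε) − 𝒯_ε(p_{0,1}))(p_{0,1} − p_{0,2}^ε)) and λ̄₂^ε := −(u_{0,2}^ε − u_{0,1})/(𝒯_ε(p_{0,2}^ε) − 𝒯_ε(p_{0,1})). Then: (a) the piecewise constant function equal to (p_{0,1}, u_{0,1}) for x < λ̄₂^ε t and to (p_{0,2}^ε, u_{0,2}^ε) for x > λ̄₂^ε t is a weak distributional solution of the ε-soft-congestion p-system (the two integral identities hold for every φ ∈ C¹_c((0,∞)×ℝ)); (b) u_{0,2}^ε → u_{0,2} and λ̄₂^ε → λ̄₂ as ε → 0. -/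
/-!
Away from the discontinuity the state is constant, so testing against `φ` only sees the jump
across the line `x = λ t`: after the shear `(t, x) ↦ (t, x + λ t)` the jump part becomes an
integral of a `t`-derivative along lines and vanishes, and what remains is exactly the
Rankine–Hugoniot relation, which holds because `u₀₂^ε` is chosen on the Hugoniot locus of
`(p₀₁, u₀₁)`. For the limits, `𝒯_ε(p₀₁) → 1` because `p₀₁ > κ` can only be balanced by the
singular term, while `𝒯_ε(p₀₂^ε)` stays away from `1` (it exceeds `𝒯ⁱ(p₀₂^ε)`), so the singular
term vanishes and `𝒯_ε(p₀₂^ε) → 𝒯ⁱ(p₀₂)`.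
-/

open Set Filter MeasureTheory Topology

/-- The singular pressure law `𝒫_ε(τ) = κ τ^{-γᵢ} + ε (τ-1)^{-γ_c}`. -/
noncomputable def Pe (κ γi γc ε τ : ℝ) : ℝ := κ * τ ^ (-γi) + ε * (τ - 1) ^ (-γc)

section

variable {E : Type*} [NormedAddCommGroup E] [NormedSpace ℝ E] [MeasurableSpace E] [BorelSpace E]

theorem integrable_fderiv_apply {μ : Measure E} [IsFiniteMeasureOnCompacts μ] {φ : E → ℝ}
    (hφ : ContDiff ℝ 1 φ) (hcs : HasCompactSupport φ) (v : E) :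
    Integrable (fun x => fderiv ℝ φ x v) μ :=
  ((hφ.continuous_fderiv one_ne_zero).clm_apply continuous_const).integrable_of_hasCompactSupport
    (hcs.fderiv_apply ℝ v)

theorem integrable_mul_fderiv_apply {μ : Measure E} [IsFiniteMeasureOnCompacts μ]
    {φ : E → ℝ} (hφ : ContDiff ℝ 1 φ) (hcs : HasCompactSupport φ) {g : E → ℝ}
    (hg : AEStronglyMeasurable g μ) {C : ℝ} (hC : ∀ x, ‖g x‖ ≤ C) (v : E) :
    Integrable (fun x => g x * fderiv ℝ φ x v) μ :=
  (integrable_fderiv_apply hφ hcs v).bdd_mul hg (Eventually.of_forall hC)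

theorem integral_fderiv_apply_eq_zero [FiniteDimensional ℝ E] (μ : Measure E)
    [μ.IsAddHaarMeasure] {φ : E → ℝ} (hφ : ContDiff ℝ 1 φ) (hcs : HasCompactSupport φ) (v : E) :
    ∫ x, fderiv ℝ φ x v ∂μ = 0 := by
  have hφ' : Integrable (fun x => 1 * fderiv ℝ φ x v) μ := by
    simpa using integrable_fderiv_apply hφ hcs v
  have hφ0 : Integrable (fun x => 1 * φ x) μ := by
    simpa using hφ.continuous.integrable_of_hasCompactSupport hcs
  simpa using integral_mul_fderiv_eq_neg_fderiv_mul_of_integrable (by simp) hφ' hφ0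
    (fun _ _ => differentiableAt_const _) (fun x _ => hφ.differentiable one_ne_zero x)

end

theorem integral_mul_fderiv_fst_eq_zero {ψ : ℝ × ℝ → ℝ} (hψ : ContDiff ℝ 1 ψ)
    (hcs : HasCompactSupport ψ) {h : ℝ → ℝ} (hm : Measurable h) {C : ℝ} (hC : ∀ y, ‖h y‖ ≤ C) :
    ∫ q, h q.2 * fderiv ℝ ψ q (1, 0) = 0 := by
  have hline : ∀ y, ∫ t, fderiv ℝ ψ (t, y) (1, 0) = 0 := by
    intro y
    have hemb : IsClosedEmbedding (fun t : ℝ => (t, y)) :=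
      Function.LeftInverse.isClosedEmbedding (f := Prod.fst) (fun _ => rfl) continuous_fst
        (by fun_prop)
    have hchain : ∀ t, fderiv ℝ (ψ ∘ fun t => (t, y)) t 1 = fderiv ℝ ψ (t, y) (1, 0) := fun t => by
      rw [(((hψ.differentiable one_ne_zero) _).hasFDerivAt.comp t
        (hasFDerivAt_prodMk_left (𝕜 := ℝ) t y)).fderiv]
      simp
    simpa only [hchain] using integral_fderiv_apply_eq_zero volume
      (hψ.comp (by fun_prop)) (hcs.comp_isClosedEmbedding hemb) 1
  have hint := integrable_mul_fderiv_apply (μ := volume) (g := fun q => h q.2) hψ hcs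
    (hm.comp measurable_snd).aestronglyMeasurable (fun q => hC q.2) (1, 0)
  rw [Measure.volume_eq_prod] at hint ⊢
  rw [integral_prod_symm _ hint]
  simp [integral_const_mul, hline]

def shear (lam : ℝ) : (ℝ × ℝ) ≃L[ℝ] ℝ × ℝ :=
  (ContinuousLinearEquiv.refl ℝ ℝ).skewProd (ContinuousLinearEquiv.refl ℝ ℝ) (lam • .id ℝ ℝ)

@[simp]
theorem shear_apply (lam : ℝ) (q : ℝ × ℝ) : shear lam q = (q.1, q.2 + lam * q.1) := rfl

theorem measurePreserving_shear (lam : ℝ) : MeasurePreserving (shear lam) := by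
  rw [Measure.volume_eq_prod]
  exact (MeasurePreserving.id volume).skew_product (g := fun t y => y + lam * t) (by fun_prop)
    (Eventually.of_forall fun t => map_add_right_eq_self volume (lam * t))

theorem integral_mul_fderiv_shear_eq_zero {φ : ℝ × ℝ → ℝ} (hφ : ContDiff ℝ 1 φ)
    (hcs : HasCompactSupport φ) {h : ℝ → ℝ} (hm : Measurable h) {C : ℝ} (hC : ∀ y, ‖h y‖ ≤ C)
    (lam : ℝ) : ∫ q, h (q.2 - lam * q.1) * fderiv ℝ φ q (1, lam) = 0 := by
  rw [← (measurePreserving_shear lam).integral_comp (shear lam).toHomeomorph.measurableEmbedding]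
  refine (integral_congr_ae (Eventually.of_forall fun q => ?_)).trans
    (integral_mul_fderiv_fst_eq_zero (hφ.comp (shear lam).contDiff)
      (hcs.comp_homeomorph (shear lam).toHomeomorph) hm hC)
  simp [(shear lam).comp_right_fderiv]

theorem ContinuousLinearMap.apply_prod_eq (L : ℝ × ℝ →L[ℝ] ℝ) (x y : ℝ) :
    L (x, y) = x * L (1, 0) + y * L (0, 1) := by
  have hxy : (x, y) = x • ((1 : ℝ), (0 : ℝ)) + y • ((0 : ℝ), (1 : ℝ)) := by simp
  rw [hxy, map_add, map_smul, map_smul, smul_eq_mul, smul_eq_mul]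

theorem integral_shock_eq_zero {φ : ℝ × ℝ → ℝ} (hφ : ContDiff ℝ 1 φ) (hcs : HasCompactSupport φ)
    {lam a b c d : ℝ} (hRH : c - lam * a = d - lam * b) :
    ∫ q : ℝ × ℝ, ((if q.2 < lam * q.1 then a else b) * fderiv ℝ φ q (1, 0)
      + (if q.2 < lam * q.1 then c else d) * fderiv ℝ φ q (0, 1)) = 0 := by
  set jump : ℝ → ℝ := (Ici 0).indicator fun _ => b - a
  have hjump : Measurable jump := measurable_const.indicator measurableSet_Ici
  -- Rankine–Hugoniot, `d - c = λ (b - a)`, makes the jump a derivative along `(1, λ)`.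
  have hpt : ∀ q : ℝ × ℝ,
      (if q.2 < lam * q.1 then a else b) * fderiv ℝ φ q (1, 0)
        + (if q.2 < lam * q.1 then c else d) * fderiv ℝ φ q (0, 1)
      = fderiv ℝ φ q (a, c) + jump (q.2 - lam * q.1) * fderiv ℝ φ q (1, lam) := by
    intro q
    rw [(fderiv ℝ φ q).apply_prod_eq a, (fderiv ℝ φ q).apply_prod_eq 1 lam]
    by_cases h : q.2 < lam * q.1
    · simp [jump, h]
    · simp [jump, h, sub_nonneg.mpr (not_lt.mp h)]
      linear_combination fderiv ℝ φ q (0, 1) * hRH.symm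
  have hint : Integrable fun q : ℝ × ℝ => jump (q.2 - lam * q.1) * fderiv ℝ φ q (1, lam) :=
    integrable_mul_fderiv_apply (g := fun q => jump (q.2 - lam * q.1)) hφ hcs
      (hjump.comp (by fun_prop)).aestronglyMeasurable
      (fun _ => norm_indicator_le_norm_self _ _) _
  rw [integral_congr_ae (Eventually.of_forall hpt),
    integral_add (integrable_fderiv_apply hφ hcs _) hint,
    integral_fderiv_apply_eq_zero volume hφ hcs,
    integral_mul_fderiv_shear_eq_zero hφ hcs hjump (fun _ => norm_indicator_le_norm_self _ _),
    add_zero]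

theorem shock_rankineHugoniot {τL τR pL pR uL uR lam : ℝ} (hτ : τL < τR) (hp : pR ≤ pL)
    (hu : uR = uL - √((τR - τL) * (pL - pR))) (hlam : lam = -(uR - uL) / (τR - τL)) :
    -uL - lam * τL = -uR - lam * τR ∧ pL - lam * uL = pR - lam * uR := by
  have hτ0 : τR - τL ≠ 0 := (sub_pos.2 hτ).ne'
  have hsq : (uL - uR) ^ 2 = (τR - τL) * (pL - pR) := by
    rw [hu, sub_sub_cancel, Real.sq_sqrt (mul_nonneg (sub_pos.2 hτ).le (sub_nonneg.2 hp))]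
  have hlamτ : lam * (τR - τL) = uL - uR := by
    rw [hlam, div_mul_cancel₀ _ hτ0]; ring
  refine ⟨by linear_combination hlamτ, ?_⟩
  have hlamu : lam * (uL - uR) = pL - pR := by
    apply mul_left_cancel₀ hτ0
    linear_combination (uL - uR) * hlamτ + hsq
  linear_combination -hlamu

theorem pSystem_shock_weakSolution {V : ℝ → ℝ} {pL pR uL uR lam : ℝ} (hV : V pL < V pR)
    (hp : pR ≤ pL) (hu : uR = uL - √((V pR - V pL) * (pL - pR)))
    (hlam : lam = -(uR - uL) / (V pR - V pL)) {φ : ℝ × ℝ → ℝ} (hφ : ContDiff ℝ 1 φ)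
    (hcs : HasCompactSupport φ) :
    (∫ q : ℝ × ℝ, (V (if q.2 < lam * q.1 then pL else pR) * fderiv ℝ φ q (1, 0)
      - (if q.2 < lam * q.1 then uL else uR) * fderiv ℝ φ q (0, 1))) = 0 ∧
    (∫ q : ℝ × ℝ, ((if q.2 < lam * q.1 then uL else uR) * fderiv ℝ φ q (1, 0)
      + (if q.2 < lam * q.1 then pL else pR) * fderiv ℝ φ q (0, 1))) = 0 := by
  obtain ⟨hRHvol, hRHvel⟩ := shock_rankineHugoniot hV hp hu hlam
  refine ⟨Eq.trans ?_ (integral_shock_eq_zero hφ hcs hRHvol), integral_shock_eq_zero hφ hcs hRHvel⟩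
  congr 1 with q
  split_ifs <;> ring

theorem Pe_strictAntiOn {κ γi γc ε : ℝ} (hκ : 0 < κ) (hγi : 0 < γi) (hγc : 0 ≤ γc)
    (hε : 0 ≤ ε) : StrictAntiOn (Pe κ γi γc ε) (Ioi 1) := by
  intro a ha b _ hab
  have hfree : b ^ (-γi) < a ^ (-γi) :=
    Real.rpow_lt_rpow_of_neg (zero_lt_one.trans ha) hab (neg_neg_of_pos hγi)
  have hsing : (b - 1) ^ (-γc) ≤ (a - 1) ^ (-γc) :=
    Real.rpow_le_rpow_of_nonpos (sub_pos.2 ha) (by linarith) (neg_nonpos.2 hγc)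
  exact add_lt_add_of_lt_of_le (mul_lt_mul_of_pos_left hfree hκ)
    (mul_le_mul_of_nonneg_left hsing hε)

/-- The paper's `𝒯ⁱ`, the specific volume of the free (uncongested) phase. -/
noncomputable def freeVolume (κ γ p : ℝ) : ℝ := (κ / p) ^ (1 / γ)

theorem freeVolume_mul_rpow_neg {κ γ τ : ℝ} (hκ : 0 < κ) (hγ : γ ≠ 0) (hτ : 0 < τ) :
    freeVolume κ γ (κ * τ ^ (-γ)) = τ := by
  rw [freeVolume, div_mul_cancel_left₀ hκ.ne', Real.rpow_neg hτ.le, inv_inv, one_div,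
    Real.rpow_rpow_inv hτ.le hγ]

theorem freeVolume_strictAntiOn {κ γ : ℝ} (hκ : 0 < κ) (hγ : 0 < γ) :
    StrictAntiOn (freeVolume κ γ) (Ioi 0) := fun _ ha _ _ hab =>
  Real.rpow_lt_rpow (div_pos hκ (ha.trans hab)).le (div_lt_div_of_pos_left hκ ha hab)
    (one_div_pos.2 hγ)

theorem one_lt_freeVolume {κ γ p : ℝ} (hγ : 0 < γ) (hp : 0 < p) (hpκ : p < κ) :
    1 < freeVolume κ γ p :=
  Real.one_lt_rpow ((one_lt_div hp).2 hpκ) (one_div_pos.2 hγ)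

theorem continuousAt_freeVolume {κ γ p : ℝ} (hγ : 0 < γ) (hp : p ≠ 0) :
    ContinuousAt (freeVolume κ γ) p :=
  (Real.continuousAt_rpow_const _ _ (Or.inr (one_div_pos.2 hγ).le)).comp
    (continuousAt_const.div continuousAt_id hp)

theorem tendsto_one_of_Pe_eq {κ γi γc p : ℝ} (hκ : 0 ≤ κ) (hγi : 0 ≤ γi) (hγc : 0 < γc)
    (hp : κ < p) {τ : ℝ → ℝ} (hτ : ∀ᶠ ε in 𝓝[>] 0, 1 < τ ε ∧ Pe κ γi γc ε (τ ε) = p) :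
    Tendsto τ (𝓝[>] 0) (𝓝 1) := by
  have hlow : ∀ᶠ ε in 𝓝[>] 0, (p - κ) * ε⁻¹ ≤ (τ ε - 1) ^ (-γc) := by
    filter_upwards [hτ, self_mem_nhdsWithin] with ε ⟨hτ1, hP⟩ hε
    have hfree : κ * τ ε ^ (-γi) ≤ κ :=
      mul_le_of_le_one_right hκ (Real.rpow_le_one_of_one_le_of_nonpos hτ1.le (neg_nonpos.2 hγi))
    rw [← div_eq_mul_inv, div_le_iff₀ hε]
    unfold Pe at hP
    linarith
  have hsing : Tendsto (fun ε => (τ ε - 1) ^ (-γc)) (𝓝[>] 0) atTop :=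
    tendsto_atTop_mono' _ hlow (tendsto_inv_nhdsGT_zero.const_mul_atTop (sub_pos.2 hp))
  have hgap : Tendsto (fun ε => τ ε - 1) (𝓝[>] 0) (𝓝 0) := by
    refine ((tendsto_rpow_neg_atTop (inv_pos.2 hγc)).comp hsing).congr' ?_
    filter_upwards [hτ] with ε ⟨hτ1, _⟩
    rw [Function.comp_apply, ← inv_neg,
      Real.rpow_rpow_inv (sub_pos.2 hτ1).le (neg_ne_zero.2 hγc.ne')]
  simpa using hgap.add_const 1

theorem tendsto_freeVolume_of_Pe_eq {κ γi γc p₀ : ℝ} (hκ : 0 < κ) (hγi : 0 < γi) (hγc : 0 ≤ γc)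
    (hp₀ : 0 < p₀) (hp₀κ : p₀ < κ) {p τ : ℝ → ℝ} (hp : Tendsto p (𝓝[>] 0) (𝓝 p₀))
    (hτ : ∀ᶠ ε in 𝓝[>] 0, 1 < τ ε ∧ Pe κ γi γc ε (τ ε) = p ε) :
    Tendsto τ (𝓝[>] 0) (𝓝 (freeVolume κ γi p₀)) := by
  set τ₀ := freeVolume κ γi p₀
  have hτ₀ : 1 < τ₀ := one_lt_freeVolume hγi hp₀ hp₀κ
  have hcont : ContinuousAt (freeVolume κ γi) p₀ := continuousAt_freeVolume hγi hp₀.ne'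
  have hlow : ∀ᶠ ε in 𝓝[>] 0, freeVolume κ γi (p ε) < τ ε := by
    filter_upwards [hτ, self_mem_nhdsWithin] with ε ⟨hτ1, hP⟩ hε
    have hτpos : 0 < τ ε := zero_lt_one.trans hτ1
    have hfree : 0 < κ * τ ε ^ (-γi) := mul_pos hκ (Real.rpow_pos_of_pos hτpos _)
    have hlt : κ * τ ε ^ (-γi) < p ε := by
      have := mul_pos (show (0 : ℝ) < ε from hε) (Real.rpow_pos_of_pos (sub_pos.2 hτ1) (-γc))
      unfold Pe at hP
      linarith
    calc freeVolume κ γi (p ε) < freeVolume κ γi (κ * τ ε ^ (-γi)) :=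
          freeVolume_strictAntiOn hκ hγi hfree (hfree.trans hlt) hlt
      _ = τ ε := freeVolume_mul_rpow_neg hκ hγi.ne' hτpos
  -- `τ ε` stays away from the singularity at `1`, so the singular term vanishes with `ε`.
  obtain ⟨m, hm1, hmτ₀⟩ := exists_between hτ₀
  have hm : ∀ᶠ ε in 𝓝[>] 0, m ≤ τ ε := by
    filter_upwards [hlow, (hcont.tendsto.comp hp).eventually (eventually_gt_nhds hmτ₀)]
      with ε h1 h2
    exact h2.le.trans h1.le
  have hsing : Tendsto (fun ε => ε * (τ ε - 1) ^ (-γc)) (𝓝[>] 0) (𝓝 0) := by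
    have hbound : Tendsto (fun ε : ℝ => ε * (m - 1) ^ (-γc)) (𝓝[>] 0) (𝓝 0) :=
      ((continuous_id.mul continuous_const).tendsto' 0 0 (zero_mul _)).mono_left
        nhdsWithin_le_nhds
    refine tendsto_of_tendsto_of_tendsto_of_le_of_le' tendsto_const_nhds hbound ?_ ?_
    · filter_upwards [hτ, self_mem_nhdsWithin] with ε ⟨hτ1, _⟩ hε
      exact mul_nonneg (le_of_lt hε) (Real.rpow_nonneg (sub_pos.2 hτ1).le _)
    · filter_upwards [hm, self_mem_nhdsWithin] with ε hmε hε
      exact mul_le_mul_of_nonneg_left (Real.rpow_le_rpow_of_nonpos (by linarith) (by linarith)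
        (neg_nonpos.2 hγc)) (le_of_lt hε)
  have hfree : Tendsto (fun ε => κ * τ ε ^ (-γi)) (𝓝[>] 0) (𝓝 p₀) := by
    have hdiff := hp.sub hsing
    rw [sub_zero] at hdiff
    refine hdiff.congr' ?_
    filter_upwards [hτ] with ε ⟨_, hP⟩
    rw [← hP, Pe, add_sub_cancel_right]
  refine (hcont.tendsto.comp hfree).congr' ?_
  filter_upwards [hτ] with ε ⟨hτ1, _⟩
  exact freeVolume_mul_rpow_neg hκ hγi.ne' (zero_lt_one.trans hτ1)

/-- The `ε`-approximate reference 2-shock interface: (a) for each `ε > 0` the piecewise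
constant function equal to `(p₀₁,u₀₁)` for `x < λ̄₂^ε t` and to `(p₀₂^ε,u₀₂^ε)` for
`x > λ̄₂^ε t` is a weak distributional solution of the soft-congestion p-system
`∂ₜ 𝒯_ε(p) − ∂ₓ u = 0`, `∂ₜ u + ∂ₓ p = 0`; (b) `u₀₂^ε → u₀₂` and `λ̄₂^ε → λ̄₂`
as `ε → 0`. -/
theorem stmt11 (κ γi γc p01 p02 u01 u02 : ℝ)
    (hκ : 0 < κ) (hγi : 1 < γi) (hγc : 1 < γc)
    (hp02 : 0 < p02) (h1 : p02 < κ) (h2 : κ < p01) (hu : u02 < u01)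
    (hRH : (p01 - p02) * ((κ / p02) ^ (1 / γi) - 1) = (u01 - u02) ^ 2)
    (lam2 : ℝ) (hlam2 : lam2 = -(u02 - u01) / ((κ / p02) ^ (1 / γi) - 1))
    (T : ℝ → ℝ → ℝ)
    (hT : ∀ ε > (0:ℝ), ∀ p > (0:ℝ), 1 < T ε p ∧ Pe κ γi γc ε (T ε p) = p)
    (p02e u02e lam2e : ℝ → ℝ)
    (hp02e : ∀ ε > (0:ℝ), 0 < p02e ε ∧ p02e ε < κ)
    (hp02conv : Tendsto p02e (nhdsWithin 0 (Ioi 0)) (nhds p02))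
    (hu02e : ∀ ε > (0:ℝ),
      u02e ε = u01 - Real.sqrt ((T ε (p02e ε) - T ε p01) * (p01 - p02e ε)))
    (hlam2e : ∀ ε > (0:ℝ),
      lam2e ε = -(u02e ε - u01) / (T ε (p02e ε) - T ε p01)) :
    (∀ ε > (0:ℝ), ∀ φ : ℝ × ℝ → ℝ, ContDiff ℝ 1 φ → HasCompactSupport φ →
      tsupport φ ⊆ (Ioi (0:ℝ)) ×ˢ (univ : Set ℝ) →
      (∫ q : ℝ × ℝ,
        (T ε (if q.2 < lam2e ε * q.1 then p01 else p02e ε) * fderiv ℝ φ q (1, 0)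
          - (if q.2 < lam2e ε * q.1 then u01 else u02e ε) * fderiv ℝ φ q (0, 1))) = 0 ∧
      (∫ q : ℝ × ℝ,
        ((if q.2 < lam2e ε * q.1 then u01 else u02e ε) * fderiv ℝ φ q (1, 0)
          + (if q.2 < lam2e ε * q.1 then p01 else p02e ε) * fderiv ℝ φ q (0, 1))) = 0) ∧
    Tendsto u02e (nhdsWithin 0 (Ioi 0)) (nhds u02) ∧
    Tendsto lam2e (nhdsWithin 0 (Ioi 0)) (nhds lam2) := by
  have hp01 : 0 < p01 := hκ.trans h2
  have hγi0 : 0 < γi := by linarith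
  have hγc0 : 0 < γc := by linarith
  have hTε : ∀ᶠ ε in 𝓝[>] 0, ∀ p > 0, 1 < T ε p ∧ Pe κ γi γc ε (T ε p) = p :=
    eventually_mem_nhdsWithin.mono hT
  refine ⟨fun ε hε φ hφ hcs _ => ?_, ?_⟩
  · obtain ⟨hp2, hp2κ⟩ := hp02e ε hε
    obtain ⟨hτ1, hP1⟩ := hT ε hε p01 hp01
    obtain ⟨hτ2, hP2⟩ := hT ε hε (p02e ε) hp2
    have hτ : T ε p01 < T ε (p02e ε) :=
      ((Pe_strictAntiOn hκ hγi0 hγc0.le hε.le).lt_iff_gt hτ2 hτ1).1 (by rw [hP1, hP2]; linarith)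
    exact pSystem_shock_weakSolution hτ (by linarith) (hu02e ε hε) (hlam2e ε hε) hφ hcs
  have hT1 : Tendsto (fun ε => T ε p01) (𝓝[>] 0) (𝓝 1) :=
    tendsto_one_of_Pe_eq hκ.le hγi0.le hγc0 h2 (hTε.mono fun _ h => h p01 hp01)
  have hT2 : Tendsto (fun ε => T ε (p02e ε)) (𝓝[>] 0) (𝓝 (freeVolume κ γi p02)) :=
    tendsto_freeVolume_of_Pe_eq hκ hγi0 hγc0.le hp02 h1 hp02conv
      (by filter_upwards [hTε, self_mem_nhdsWithin] with ε h hε using h _ (hp02e ε hε).1)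
  have hu02 : Tendsto u02e (𝓝[>] 0) (𝓝 u02) := by
    have hlim : Tendsto (fun ε => u01 - √((T ε (p02e ε) - T ε p01) * (p01 - p02e ε))) (𝓝[>] 0)
        (𝓝 (u01 - √((freeVolume κ γi p02 - 1) * (p01 - p02)))) :=
      tendsto_const_nhds.sub ((hT2.sub hT1).mul (tendsto_const_nhds.sub hp02conv)).sqrt
    have hjump : (freeVolume κ γi p02 - 1) * (p01 - p02) = (u01 - u02) ^ 2 := by
      rw [freeVolume, mul_comm, hRH]
    rw [hjump, Real.sqrt_sq (sub_pos.2 hu).le, sub_sub_cancel] at hlim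
    exact hlim.congr' (eventually_mem_nhdsWithin.mono fun ε hε => (hu02e ε hε).symm)
  refine ⟨hu02, ?_⟩
  rw [hlam2]
  exact (((hu02.sub tendsto_const_nhds).neg).div (hT2.sub hT1)
    (sub_ne_zero.2 (one_lt_freeVolume hγi0 hp02 h1).ne')).congr'
    (eventually_mem_nhdsWithin.mono fun ε hε => (hlam2e ε hε).symm)
end

section
/- Assume p_{0,2} < κ < p_{0,1} and u_{0,2} < u_{0,1} satisfy (p_{0,1} − p_{0,2})(𝒯^i(p_{0,2}) − 1) = (u_{0,1} − u_{0,2})², and set λ̄₂ = −(u_{0,2} − u_{0,1})/(𝒯^i(p_{0,2}) − 1). Then there exist c > 0, δ > 0 and ε̄ > 0 such that for all 0 < ε < ε̄: (a) √(−1/𝒯_ε'(p)) ≤ λ̄₂ − c for every p ∈ (p_{0,2} − δ, p_{0,2} + δ) (the characteristic speeds on the free side of the interface are uniformly slower than the interface speed); (b) √(−1/𝒯_ε'(p)) ≥ λ̄₂ + c for every p ∈ (p_{0,1} − δ, p_{0,1} + δ) (the characteristic speeds on the congested side are uniformly faster than the interface speed). -/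
/-!
Since `𝒯_ε` inverts `𝒫_ε`, the squared speed `-1/𝒯_ε'(p)` equals `-𝒫_ε'(𝒯_ε(p))`, a decreasing
function of the volume. On the free side `𝒯_ε(p) > 𝒯^i(p)`, so near `p₀₂` the squared speed is at
most that of the limit law plus an `ε`-term that is uniformly small; by Bernoulli's inequality
`γᵢ (𝒯^i(p₀₂) - 1) ≤ κ / p₀₂ - 1`, the limit value lies strictly below
`λ̄₂² = (p₀₁ - p₀₂) / (𝒯^i(p₀₂) - 1)`, the slope of the Rankine–Hugoniot chord. On the congested
side the singular term must carry the pressure `p - κ ≥ m > 0`, which forces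
`𝒯_ε(p) - 1 ≤ (ε / m)^{1/γ_c}`, so the squared speed is at least `γ_c m (m / ε)^{1/γ_c} → ∞`.
-/

open Set Filter MeasureTheory Topology

/-- `-𝒫_ε'(τ)`: the square of the characteristic speed `λ₂^ε` at the pressure `𝒫_ε(τ)`. -/
noncomputable def charSpeedSq (κ γi γc ε τ : ℝ) : ℝ :=
  κ * γi * τ ^ (-γi - 1) + ε * γc * (τ - 1) ^ (-γc - 1)

/-- The free branch `𝒯^i` of the limit specific-volume law. -/
noncomputable def Ti (κ γi p : ℝ) : ℝ := (κ / p) ^ (1 / γi)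

section InverseFunction

theorem image_eq_of_rightInvOn {α β : Type*} {f : α → β} {g : β → α} {s : Set α} {t : Set β}
    (hf : InjOn f s) (hgf : RightInvOn g f t) (hg : MapsTo g t s) (hf' : MapsTo f s t) :
    g '' t = s :=
  (image_subset_iff.mpr hg).antisymm fun x hx =>
    ⟨f x, hf' hx, hf (hg (hf' hx)) hx (hgf (hf' hx))⟩

variable {α β : Type*} [LinearOrder α] [Preorder β] {f : α → β} {g : β → α} {s : Set α}
  {t : Set β}

theorem strictAntiOn_of_rightInvOn (hf : AntitoneOn f s) (hgf : RightInvOn g f t)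
    (hg : MapsTo g t s) : StrictAntiOn g t := by
  intro y₁ hy₁ y₂ hy₂ hlt
  by_contra! hle
  have := hf (hg hy₁) (hg hy₂) hle
  rw [hgf hy₁, hgf hy₂] at this
  exact hlt.not_ge this

end InverseFunction

section RealInverseFunction

variable {f g : ℝ → ℝ} {s t : Set ℝ} {y f' : ℝ}

theorem continuousAt_of_rightInvOn (hf : StrictAntiOn f s) (hgf : RightInvOn g f t)
    (hg : MapsTo g t s) (hf' : MapsTo f s t) (hs : IsOpen s) (ht : IsOpen t) (hy : y ∈ t) :
    ContinuousAt g y := by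
  have hmono : MonotoneOn (β := ℝᵒᵈ) g t :=
    (strictAntiOn_of_rightInvOn hf.antitoneOn hgf hg).antitoneOn.dual_right
  refine continuousAt_of_monotoneOn_of_image_mem_nhds (β := ℝᵒᵈ) hmono (ht.mem_nhds hy) ?_
  exact image_eq_of_rightInvOn hf.injOn hgf hg hf' ▸ hs.mem_nhds (hg hy)

theorem hasDerivAt_of_rightInvOn (hf : StrictAntiOn f s) (hgf : RightInvOn g f t)
    (hg : MapsTo g t s) (hf' : MapsTo f s t) (hs : IsOpen s) (ht : IsOpen t) (hy : y ∈ t)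
    (hderiv : HasDerivAt f f' (g y)) (hne : f' ≠ 0) : HasDerivAt g f'⁻¹ y :=
  hderiv.of_local_left_inverse (continuousAt_of_rightInvOn hf hgf hg hf' hs ht hy) hne
    (eventually_of_mem (ht.mem_nhds hy) fun _ hz => hgf hz)

end RealInverseFunction

section PressureLaw

variable {κ γi γc ε τ p m : ℝ}

theorem hasDerivAt_Pe (hτ : 1 < τ) :
    HasDerivAt (Pe κ γi γc ε) (-charSpeedSq κ γi γc ε τ) τ := by
  have hfree := Real.hasDerivAt_rpow_const (p := -γi) (Or.inl (by positivity : τ ≠ 0))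
  have hsing := ((hasDerivAt_id τ).sub_const 1).rpow_const (p := -γc)
    (Or.inl (sub_ne_zero.mpr hτ.ne'))
  exact ((hfree.const_mul κ).add (hsing.const_mul ε)).congr_deriv (by
    simp only [charSpeedSq, id]
    ring)

theorem Pe_pos (hκ : 0 < κ) (hε : 0 ≤ ε) (hτ : 1 < τ) : 0 < Pe κ γi γc ε τ := by
  unfold Pe
  have : 0 ≤ (τ - 1) ^ (-γc) := Real.rpow_nonneg (by linarith) _
  have : 0 < τ ^ (-γi) := Real.rpow_pos_of_pos (by linarith) _
  positivity

theorem charSpeedSq_pos (hκ : 0 < κ) (hγi : 0 < γi) (hγc : 0 < γc) (hε : 0 ≤ ε) (hτ : 1 < τ) :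
    0 < charSpeedSq κ γi γc ε τ := by
  unfold charSpeedSq
  have : 0 < (τ - 1) ^ (-γc - 1) := Real.rpow_pos_of_pos (by linarith) _
  have : 0 < τ ^ (-γi - 1) := Real.rpow_pos_of_pos (by linarith) _
  positivity

theorem strictAntiOn_Pe (hκ : 0 < κ) (hγi : 0 < γi) (hγc : 0 < γc) (hε : 0 ≤ ε) :
    StrictAntiOn (Pe κ γi γc ε) (Ioi 1) :=
  strictAntiOn_of_deriv_neg (convex_Ioi 1)
    (fun x hx => (hasDerivAt_Pe hx).continuousAt.continuousWithinAt)
    fun x hx => by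
      rw [interior_Ioi] at hx
      rw [(hasDerivAt_Pe hx).deriv, neg_neg_iff_pos]
      exact charSpeedSq_pos hκ hγi hγc hε hx

theorem strictAntiOn_charSpeedSq (hκ : 0 < κ) (hγi : 0 < γi) (hγc : 0 < γc) (hε : 0 ≤ ε) :
    StrictAntiOn (charSpeedSq κ γi γc ε) (Ioi 1) := by
  intro x (hx : 1 < x) y (hy : 1 < y) hxy
  have hfree : y ^ (-γi - 1) < x ^ (-γi - 1) :=
    Real.rpow_lt_rpow_of_neg (by linarith) hxy (by linarith)
  have hcong : (y - 1) ^ (-γc - 1) ≤ (x - 1) ^ (-γc - 1) :=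
    Real.rpow_le_rpow_of_nonpos (by linarith) (by linarith) (by linarith)
  exact add_lt_add_of_lt_of_le (mul_lt_mul_of_pos_left hfree (by positivity))
    (mul_le_mul_of_nonneg_left hcong (by positivity))

theorem one_lt_Ti (hγi : 0 < γi) (hp : 0 < p) (hpκ : p < κ) : 1 < Ti κ γi p :=
  Real.one_lt_rpow ((one_lt_div hp).mpr hpκ) (by positivity)

theorem Ti_lt_of_Pe_eq (hκ : 0 < κ) (hγi : 0 < γi) (hε : 0 < ε) (hp : 0 < p) (hτ : 1 < τ)
    (h : Pe κ γi γc ε τ = p) : Ti κ γi p < τ := by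
  have hτ0 : 0 < τ := by linarith
  have hfree : κ * τ ^ (-γi) < p := by
    have : 0 < ε * (τ - 1) ^ (-γc) := mul_pos hε (Real.rpow_pos_of_pos (by linarith) _)
    unfold Pe at h
    linarith
  rw [Ti, one_div, Real.rpow_inv_lt_iff_of_pos (by positivity) hτ0.le hγi, div_lt_iff₀ hp]
  rw [Real.rpow_neg hτ0.le, ← div_eq_mul_inv, div_lt_iff₀ (by positivity)] at hfree
  linarith

theorem lt_charSpeedSq_of_le_Pe (hκ : 0 < κ) (hγi : 0 < γi) (hγc : 0 < γc) (hε : 0 < ε)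
    (hm : 0 < m) (hτ : 1 < τ) (h : κ + m ≤ Pe κ γi γc ε τ) :
    γc * m * (m / ε) ^ (1 / γc) < charSpeedSq κ γi γc ε τ := by
  have hX : 0 < τ - 1 := by linarith
  have hsing : m < ε * (τ - 1) ^ (-γc) := by
    have : κ * τ ^ (-γi) < κ := mul_lt_of_lt_one_right hκ
      (Real.rpow_lt_one_of_one_lt_of_neg hτ (by linarith))
    unfold Pe at h
    linarith
  have hinv : (m / ε) ^ (1 / γc) < (τ - 1)⁻¹ := by
    calc (m / ε) ^ (1 / γc) < ((τ - 1) ^ (-γc)) ^ (1 / γc) :=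
          Real.rpow_lt_rpow (by positivity) ((div_lt_iff₀' hε).mpr hsing) (by positivity)
      _ = (τ - 1)⁻¹ := by
          rw [← Real.rpow_mul hX.le, neg_mul, mul_one_div_cancel hγc.ne', Real.rpow_neg_one]
  have hfree : 0 < κ * γi * τ ^ (-γi - 1) := by
    have : 0 < τ ^ (-γi - 1) := Real.rpow_pos_of_pos (by linarith) _
    positivity
  calc γc * m * (m / ε) ^ (1 / γc) < γc * (ε * (τ - 1) ^ (-γc)) * (τ - 1)⁻¹ := by
        gcongr
    _ = ε * γc * (τ - 1) ^ (-γc - 1) := by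
        rw [Real.rpow_sub hX, Real.rpow_one, div_eq_mul_inv]
        ring
    _ < charSpeedSq κ γi γc ε τ := by
        unfold charSpeedSq
        linarith

end PressureLaw

section SoftCongestion

variable {κ γi γc : ℝ}

theorem neg_one_div_deriv_eq_charSpeedSq (hκ : 0 < κ) (hγi : 0 < γi) (hγc : 0 < γc) {ε p : ℝ}
    {T : ℝ → ℝ} (hε : 0 < ε) (hT : ∀ p > (0:ℝ), 1 < T p ∧ Pe κ γi γc ε (T p) = p)
    (hp : 0 < p) : -1 / deriv T p = charSpeedSq κ γi γc ε (T p) := by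
  have hderiv := hasDerivAt_of_rightInvOn (strictAntiOn_Pe hκ hγi hγc hε.le)
    (fun q hq => (hT q hq).2) (fun q hq => (hT q hq).1) (fun τ hτ => Pe_pos hκ hε.le hτ)
    isOpen_Ioi isOpen_Ioi hp (hasDerivAt_Pe (hT p hp).1)
    (neg_ne_zero.mpr (charSpeedSq_pos hκ hγi hγc hε.le (hT p hp).1).ne')
  rw [hderiv.deriv, div_inv_eq_mul, neg_one_mul, neg_neg]

variable {T : ℝ → ℝ → ℝ}

theorem eventually_neg_one_div_deriv_lt (hκ : 0 < κ) (hγi : 0 < γi) (hγc : 0 < γc)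
    (hT : ∀ ε > (0:ℝ), ∀ p > (0:ℝ), 1 < T ε p ∧ Pe κ γi γc ε (T ε p) = p) {p₀ M : ℝ}
    (hp₀ : 0 < p₀) (hp₀κ : p₀ < κ) (hM : charSpeedSq κ γi γc 0 (Ti κ γi p₀) < M) :
    ∀ᶠ x in 𝓝[>] 0 ×ˢ 𝓝 p₀, -1 / deriv (T x.1) x.2 < M := by
  have hcont : ContinuousAt (fun x : ℝ × ℝ => charSpeedSq κ γi γc x.1 (Ti κ γi x.2)) (0, p₀) := by
    have hTi : ContinuousAt (fun x : ℝ × ℝ => Ti κ γi x.2) (0, p₀) :=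
      ((continuousAt_const.div continuousAt_snd hp₀.ne').rpow_const
        (Or.inl (div_pos hκ hp₀).ne'))
    have hTi₁ : Ti κ γi p₀ - 1 ≠ 0 := sub_ne_zero.mpr (one_lt_Ti hγi hp₀ hp₀κ).ne'
    exact (continuousAt_const.mul (hTi.rpow_const
        (Or.inl (zero_lt_one.trans (one_lt_Ti hγi hp₀ hp₀κ)).ne'))).add
      ((continuousAt_fst.mul continuousAt_const).mul
        ((hTi.sub continuousAt_const).rpow_const (Or.inl hTi₁)))
  have hlt := hcont.eventually_lt continuousAt_const hM
  rw [nhds_prod_eq] at hlt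
  filter_upwards [hlt.filter_mono (prod_mono nhdsWithin_le_nhds le_rfl),
    (eventually_mem_nhdsWithin (s := Ioi (0:ℝ))).prod_mk (Ioo_mem_nhds hp₀ hp₀κ)]
    with ⟨ε, p⟩ hεp ⟨(hε : 0 < ε), hp, hpκ⟩
  obtain ⟨hτ, hPe⟩ := hT ε hε p hp
  rw [neg_one_div_deriv_eq_charSpeedSq hκ hγi hγc hε (hT ε hε) hp]
  exact (strictAntiOn_charSpeedSq hκ hγi hγc hε.le (one_lt_Ti hγi hp hpκ) hτ
    (Ti_lt_of_Pe_eq hκ hγi hε hp hτ hPe)).trans hεp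

theorem eventually_le_neg_one_div_deriv (hκ : 0 < κ) (hγi : 0 < γi) (hγc : 0 < γc)
    (hT : ∀ ε > (0:ℝ), ∀ p > (0:ℝ), 1 < T ε p ∧ Pe κ γi γc ε (T ε p) = p) {p₀ : ℝ}
    (hp₀ : κ < p₀) (L : ℝ) :
    ∀ᶠ x in 𝓝[>] 0 ×ˢ 𝓝 p₀, L ≤ -1 / deriv (T x.1) x.2 := by
  obtain ⟨m, hm, hmp₀⟩ : ∃ m, 0 < m ∧ κ + m < p₀ := ⟨(p₀ - κ) / 2, by linarith, by linarith⟩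
  have hblowup : Tendsto (fun ε => γc * m * (m / ε) ^ (1 / γc)) (𝓝[>] 0) atTop :=
    Tendsto.const_mul_atTop (by positivity) <| (tendsto_rpow_atTop (by positivity)).comp <|
      tendsto_inv_nhdsGT_zero.const_mul_atTop hm
  filter_upwards [((hblowup.eventually_ge_atTop L).and eventually_mem_nhdsWithin).prod_mk
    (Ioi_mem_nhds hmp₀)] with ⟨ε, p⟩ ⟨⟨hL, (hε : 0 < ε)⟩, (hp : κ + m < p)⟩
  have hp0 : 0 < p := by linarith
  obtain ⟨hτ, hPe⟩ := hT ε hε p hp0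
  rw [neg_one_div_deriv_eq_charSpeedSq hκ hγi hγc hε (hT ε hε) hp0]
  exact hL.trans (lt_charSpeedSq_of_le_Pe hκ hγi hγc hε hm hτ (hPe.symm ▸ hp.le)).le

end SoftCongestion

theorem exists_forall_Ioo_of_eventually {P : ℝ × ℝ → Prop} {p₀ : ℝ}
    (h : ∀ᶠ x in 𝓝[>] 0 ×ˢ 𝓝 p₀, P x) :
    ∃ δ > 0, ∃ ε₀ > 0, ∀ ε ∈ Ioo 0 ε₀, ∀ p ∈ Ioo (p₀ - δ) (p₀ + δ), P (ε, p) := by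
  obtain ⟨Pε, hPε, Pp, hPp, hP⟩ := eventually_prod_iff.mp h
  obtain ⟨ε₀, hε₀, hIoo_ε⟩ := mem_nhdsGT_iff_exists_Ioo_subset.mp hPε
  obtain ⟨δ, hδ, hball⟩ := Metric.mem_nhds_iff.mp hPp
  rw [Real.ball_eq_Ioo] at hball
  exact ⟨δ, hδ, ε₀, hε₀, fun ε hε p hp => hP (hIoo_ε hε) (hball hp)⟩

theorem exists_pos_lt_sub_sq {x y : ℝ} (hy : 0 < y) (hx : x < y ^ 2) :
    ∃ c > 0, c < y ∧ x < (y - c) ^ 2 := by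
  have hsqrt : √x < y := (Real.sqrt_lt' hy).mpr hx
  have hsqrt0 : 0 ≤ √x := Real.sqrt_nonneg x
  exact ⟨(y - √x) / 2, by linarith, by linarith, (Real.sqrt_lt' (by linarith)).mp (by linarith)⟩

theorem charSpeedSq_Ti_lt_chord {κ γi γc p₀₁ p₀₂ : ℝ} (hκ : 0 < κ) (hγi : 1 ≤ γi)
    (hp₀₂ : 0 < p₀₂) (h₂ : p₀₂ < κ) (h₁ : κ < p₀₁) :
    charSpeedSq κ γi γc 0 (Ti κ γi p₀₂) < (p₀₁ - p₀₂) / (Ti κ γi p₀₂ - 1) := by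
  set a := Ti κ γi p₀₂
  have ha : 1 < a := one_lt_Ti (by linarith) hp₀₂ h₂
  have hapow : a ^ γi = κ / p₀₂ := by
    rw [show a = (κ / p₀₂) ^ γi⁻¹ by rw [← one_div]; rfl]
    exact Real.rpow_inv_rpow (div_pos hκ hp₀₂).le (by linarith)
  have hbern : 1 + γi * (a - 1) ≤ a ^ γi := by
    simpa using one_add_mul_self_le_rpow_one_add (s := a - 1) (by linarith) hγi
  have hspeed : charSpeedSq κ γi γc 0 a = γi * p₀₂ / a := by
    rw [charSpeedSq, zero_mul, zero_mul, add_zero, Real.rpow_sub (by linarith), Real.rpow_one,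
      Real.rpow_neg (by linarith), hapow]
    field_simp
  rw [hspeed, div_lt_div_iff₀ (by linarith) (by linarith)]
  rw [hapow, le_div_iff₀ hp₀₂] at hbern
  nlinarith

/-- Uniform separation of characteristic speeds from the interface speed `λ̄₂`:
(a) near the free reference pressure `p₀₂` one has `√(-1/𝒯_ε'(p)) ≤ λ̄₂ − c`;
(b) near the congested reference pressure `p₀₁` one has `√(-1/𝒯_ε'(p)) ≥ λ̄₂ + c`,
uniformly for `ε` small. -/
theorem stmt12 (κ γi γc p01 p02 u01 u02 : ℝ)
    (hκ : 0 < κ) (hγi : 1 < γi) (hγc : 1 < γc)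
    (hp02 : 0 < p02) (h1 : p02 < κ) (h2 : κ < p01) (hu : u02 < u01)
    (hRH : (p01 - p02) * ((κ / p02) ^ (1 / γi) - 1) = (u01 - u02) ^ 2)
    (lam2 : ℝ) (hlam2 : lam2 = -(u02 - u01) / ((κ / p02) ^ (1 / γi) - 1))
    (T : ℝ → ℝ → ℝ)
    (hT : ∀ ε > (0:ℝ), ∀ p > (0:ℝ), 1 < T ε p ∧ Pe κ γi γc ε (T ε p) = p) :
    ∃ c δ εb : ℝ, 0 < c ∧ 0 < δ ∧ 0 < εb ∧
      ∀ ε, 0 < ε → ε < εb →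
        (∀ p ∈ Ioo (p02 - δ) (p02 + δ),
          Real.sqrt (-1 / deriv (T ε) p) ≤ lam2 - c) ∧
        (∀ p ∈ Ioo (p01 - δ) (p01 + δ),
          lam2 + c ≤ Real.sqrt (-1 / deriv (T ε) p)) := by
  change (p01 - p02) * (Ti κ γi p02 - 1) = _ at hRH
  change lam2 = _ / (Ti κ γi p02 - 1) at hlam2
  have ha : 0 < Ti κ γi p02 - 1 := sub_pos.mpr (one_lt_Ti (by linarith) hp02 h1)
  have hlam2_pos : 0 < lam2 := hlam2 ▸ div_pos (by linarith) ha
  have hfree : charSpeedSq κ γi γc 0 (Ti κ γi p02) < lam2 ^ 2 := by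
    have hlam2_sq : lam2 ^ 2 = (p01 - p02) / (Ti κ γi p02 - 1) := by
      rw [hlam2, div_pow, neg_sub, ← hRH]
      field_simp
    exact hlam2_sq ▸ charSpeedSq_Ti_lt_chord hκ hγi.le hp02 h1 h2
  obtain ⟨c, hc, hc_lam2, hcfree⟩ := exists_pos_lt_sub_sq hlam2_pos hfree
  have hγi0 : 0 < γi := by linarith
  have hγc0 : 0 < γc := by linarith
  obtain ⟨δ₁, hδ₁, ε₁, hε₁, hslow⟩ := exists_forall_Ioo_of_eventually
    (eventually_neg_one_div_deriv_lt hκ hγi0 hγc0 hT hp02 h1 hcfree)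
  obtain ⟨δ₂, hδ₂, ε₂, hε₂, hfast⟩ := exists_forall_Ioo_of_eventually
    (eventually_le_neg_one_div_deriv hκ hγi0 hγc0 hT h2 ((lam2 + c) ^ 2))
  have hδ₁' := min_le_left δ₁ δ₂
  have hδ₂' := min_le_right δ₁ δ₂
  refine ⟨c, min δ₁ δ₂, min ε₁ ε₂, hc, lt_min hδ₁ hδ₂, lt_min hε₁ hε₂,
    fun ε hε hεb => ⟨fun p hp => ?_, fun p hp => ?_⟩⟩
  · refine Real.sqrt_le_iff.mpr ⟨by linarith, (hslow ε ⟨hε, ?_⟩ p ?_).le⟩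
    · exact hεb.trans_le (min_le_left _ _)
    · exact Ioo_subset_Ioo (by linarith) (by linarith) hp
  · refine (Real.le_sqrt' (by linarith)).mpr (hfast ε ⟨hε, ?_⟩ p ?_)
    · exact hεb.trans_le (min_le_right _ _)
    · exact Ioo_subset_Ioo (by linarith) (by linarith) hp
end
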